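/- arXiv:1711.05400 — 4 statements merged into one kernel-verified Lean document; each statement's English description precedes it below -/
import Mathlib

section
/- Let R(ξ) be an N × N polynomial matrix over ℝ[ξ] of full rank (nonzero determinant) whose behavior B = {y : ℤ≥0 → ℝ^N : R(σ)y = 0} is nonzero. Let L be the largest integer such that for every subset J ⊆ {1,…,N} of cardinality L, the N × L submatrix R_J(ξ) is left unimodular. Then the security index satisfies δ(Σ) = L + 1, where δ(Σ) := min{‖y‖ : y ∈ B, y ≠ 0}. -/
/-! If a nonzero trajectory `y` is supported on a set `J` of `L` components, then
`R_J(σ) y_J = 0`, and a polynomial left inverse of `R_J` kills `y_J`; so every nonzero trajectory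
has weight at least `L + 1`. Conversely, if `R_J` with `|J| = L + 1` is not left unimodular, its
maximal minors generate a proper ideal of `ℝ[ξ]` and so have a common complex root `z`. Then
`R_J(z)` has a nonzero kernel vector `v`, and the real or the imaginary part of `t ↦ v zᵗ`, padded
by zero outside `J`, is a nonzero trajectory of weight at most `L + 1`. -/

open Polynomial

/-- A signal with components indexed by `β`. -/
abbrev Signal (N : ℕ) := ℕ → Fin N → ℝ

/-- Action of a scalar polynomial on a scalar signal via the shift operator `σ`. -/
noncomputable def polyShift (a : Polynomial ℝ) (y : ℕ → ℝ) : ℕ → ℝ :=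
  fun t => a.sum fun k c => c * y (t + k)

/-- Action of a polynomial matrix on a signal via the shift operator `σ`. -/
noncomputable def matShift {α β : Type*} [Fintype β]
    (P : Matrix α β (Polynomial ℝ)) (y : ℕ → β → ℝ) : ℕ → α → ℝ :=
  fun t i => ∑ j, polyShift (P i j) (fun s => y s j) t

/-- Support of a signal: indices of components not identically zero. -/
def sigSupp {N : ℕ} (y : Signal N) : Set (Fin N) := {i | ¬ ∀ t, y t i = 0}

/-- Weight of a signal. -/
noncomputable def wt {N : ℕ} (y : Signal N) : ℕ := (sigSupp y).ncard

/-- A polynomial matrix is left unimodular if it has a polynomial left inverse. -/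
def LeftUnimodular {α β : Type*} [Fintype α] [Fintype β] [DecidableEq β]
    (P : Matrix α β (Polynomial ℝ)) : Prop :=
  ∃ G : Matrix β α (Polynomial ℝ), G * P = 1

/-- Submatrix of the columns of `R` indexed by `J`. -/
def colSub {N : ℕ} (R : Matrix (Fin N) (Fin N) (Polynomial ℝ)) (J : Finset (Fin N)) :
    Matrix (Fin N) {x // x ∈ J} (Polynomial ℝ) :=
  R.submatrix id (fun j => (j : Fin N))

/-- Submatrix of the rows of `M` indexed by `J`. -/
def rowSub {N m : ℕ} (M : Matrix (Fin N) (Fin m) (Polynomial ℝ)) (J : Finset (Fin N)) :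
    Matrix {x // x ∈ J} (Fin m) (Polynomial ℝ) :=
  M.submatrix (fun i => (i : Fin N)) id

/-- Restriction of a signal to the components indexed by `J`. -/
def sigRestrict {N : ℕ} (r : Signal N) (J : Finset (Fin N)) : ℕ → {x // x ∈ J} → ℝ :=
  fun t i => r t (i : Fin N)

/-- Security index: the minimum weight of a nonzero signal in the behavior. -/
noncomputable def secIdx {N : ℕ} (B : Set (Signal N)) : ℕ :=
  sInf {k | ∃ y ∈ B, y ≠ 0 ∧ wt y = k}

open Matrix

lemma Matrix.exists_mul_eq_one_of_span_det_submatrix_eq_top {R m κ : Type*} [CommRing R]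
    [Fintype m] [DecidableEq m] [Fintype κ] [DecidableEq κ] (P : Matrix m κ R)
    (h : Ideal.span (Set.range fun r : κ → m => (P.submatrix r id).det) = ⊤) :
    ∃ G : Matrix κ m R, G * P = 1 := by
  obtain ⟨c, hc⟩ := (Submodule.mem_span_range_iff_exists_fun R).mp (h ▸ Submodule.mem_top :
    (1 : R) ∈ Ideal.span (Set.range fun r : κ → m => (P.submatrix r id).det))
  have select : ∀ r : κ → m, (1 : Matrix m m R).submatrix r id * P = P.submatrix r id :=
    fun r => Matrix.one_submatrix_mul r (Equiv.refl m) P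
  refine ⟨∑ r, c r • ((P.submatrix r id).adjugate * (1 : Matrix m m R).submatrix r id), ?_⟩
  simp only [Matrix.sum_mul, Matrix.smul_mul, Matrix.mul_assoc, select, Matrix.adjugate_mul,
    smul_smul, ← Finset.sum_smul]
  simp only [← smul_eq_mul, hc, one_smul]

lemma Ideal.exists_aeval_eq_zero_of_ne_top {K L : Type*} [Field K] [Field L] [IsAlgClosed L]
    [Algebra K L] {I : Ideal K[X]} (hI : I ≠ ⊤) : ∃ z : L, ∀ p ∈ I, aeval z p = 0 := by
  set g := Submodule.IsPrincipal.generator I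
  have hIg : I = Ideal.span {g} := (Ideal.span_singleton_generator I).symm
  have hg : ¬ IsUnit g := fun hu => hI (by rw [hIg, Ideal.span_singleton_eq_top]; exact hu)
  obtain ⟨z, hz⟩ := IsAlgClosed.exists_root (g.map (algebraMap K L))
    (by rwa [degree_map, Ne, ← isUnit_iff_degree_eq_zero])
  refine ⟨z, fun p hp => aeval_eq_zero_of_dvd_aeval_eq_zero (p := g) ?_ ?_⟩
  · rwa [hIg, Ideal.mem_span_singleton] at hp
  · rwa [aeval_def, eval₂_eq_eval_map]

lemma Matrix.exists_mulVec_eq_zero_of_forall_det_submatrix_eq_zero {K m n : Type*} [Field K]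
    [Fintype m] [Fintype n] [DecidableEq n] (A : Matrix m n K)
    (h : ∀ r : n → m, (A.submatrix r id).det = 0) : ∃ v ≠ 0, A *ᵥ v = 0 := by
  by_contra! hker
  have hcols : LinearIndependent K A.col := Matrix.mulVec_injective_iff.mp <| by
    rw [← Matrix.coe_mulVecLin]
    exact (injective_iff_map_eq_zero _).mpr fun v hv => not_not.mp fun hv0 => hker v hv0 hv
  obtain ⟨κ, a, ha, hspan, hrows⟩ := exists_linearIndependent' K A.row
  have : Finite κ := Finite.of_injective a ha
  have : Fintype κ := Fintype.ofFinite κ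
  have hcard : Fintype.card n = Fintype.card κ := by
    rw [← finrank_span_eq_card hcols, ← Matrix.rank_eq_finrank_span_cols,
      Matrix.rank_eq_finrank_span_row, ← hspan, finrank_span_eq_card hrows]
  set r := a ∘ Fintype.equivOfCardEq hcard
  have hunit : IsUnit (A.submatrix r id) := Matrix.linearIndependent_rows_iff_isUnit.mp
    (hrows.comp _ (Fintype.equivOfCardEq hcard).injective)
  exact (Matrix.isUnit_iff_isUnit_det _).mp hunit |>.ne_zero (h r)

noncomputable def sigShift : Module.End ℝ (ℕ → ℝ) where
  toFun y t := y (t + 1)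
  map_add' _ _ := rfl
  map_smul' _ _ := rfl

lemma sigShift_pow_apply (n : ℕ) (y : ℕ → ℝ) (t : ℕ) : (sigShift ^ n) y t = y (t + n) := by
  induction n generalizing t with
  | zero => rfl
  | succ n ih =>
    rw [pow_succ', Module.End.mul_apply]
    exact (ih (t + 1) : sigShift ((sigShift ^ n) y) t = _).trans (congrArg y (by omega))

lemma polyShift_eq_aeval (a : ℝ[X]) (y : ℕ → ℝ) : polyShift a y = aeval sigShift a y := by
  ext t
  simp [polyShift, aeval_eq_sum_range, Polynomial.sum_over_range, sigShift_pow_apply, add_comm]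

lemma matShift_apply {α β : Type*} [Fintype β] (P : Matrix α β ℝ[X]) (y : ℕ → β → ℝ)
    (t : ℕ) (i : α) : matShift P y t i = ∑ j, aeval sigShift (P i j) (fun s => y s j) t := by
  simp only [matShift, polyShift_eq_aeval]

lemma matShift_mul {α β γ : Type*} [Fintype β] [Fintype γ] (A : Matrix α β ℝ[X])
    (B : Matrix β γ ℝ[X]) (y : ℕ → γ → ℝ) :
    matShift (A * B) y = matShift A (matShift B y) := by
  ext t i
  simp only [matShift_apply, Matrix.mul_apply, map_sum, map_mul, Module.End.mul_apply,
    LinearMap.sum_apply, Finset.sum_apply]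
  rw [Finset.sum_comm]
  congr! with k
  rw [← Finset.sum_fn, map_sum, Finset.sum_apply]

lemma matShift_one {β : Type*} [Fintype β] [DecidableEq β] (y : ℕ → β → ℝ) :
    matShift (1 : Matrix β β ℝ[X]) y = y := by
  ext t i
  simp [matShift_apply, Matrix.one_apply, apply_ite, ite_apply]

lemma matShift_zero {α β : Type*} [Fintype β] (P : Matrix α β ℝ[X]) :
    matShift P 0 = 0 := by
  ext t i
  simp [matShift_apply, ← Pi.zero_def]

def sigExtend {N : ℕ} (J : Finset (Fin N)) (x : ℕ → J → ℝ) : Signal N :=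
  fun t i => if h : i ∈ J then x t ⟨i, h⟩ else 0

lemma sigSupp_sigExtend_subset {N : ℕ} (J : Finset (Fin N)) (x : ℕ → J → ℝ) :
    sigSupp (sigExtend J x) ⊆ J := by
  intro i hi
  by_contra hiJ
  exact hi fun t => dif_neg hiJ

lemma sigRestrict_sigExtend {N : ℕ} (J : Finset (Fin N)) (x : ℕ → J → ℝ) :
    sigRestrict (sigExtend J x) J = x := by
  ext t i
  exact dif_pos i.2

lemma sigExtend_sigRestrict {N : ℕ} {y : Signal N} {J : Finset (Fin N)} (hy : sigSupp y ⊆ J) :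
    sigExtend J (sigRestrict y J) = y := by
  ext t i
  by_cases hi : i ∈ J
  · exact dif_pos hi
  · rw [sigExtend, dif_neg hi]
    by_contra h
    exact hi (hy fun hzero => h (hzero t).symm)

lemma matShift_sigExtend {N : ℕ} (R : Matrix (Fin N) (Fin N) ℝ[X]) (J : Finset (Fin N))
    (x : ℕ → J → ℝ) : matShift R (sigExtend J x) = matShift (colSub R J) x := by
  ext t i
  rw [matShift_apply, matShift_apply, ← Finset.sum_subset (Finset.subset_univ J),
    ← Finset.sum_coe_sort J]
  · exact Finset.sum_congr rfl fun j _ =>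
      congrArg (fun f => aeval sigShift (R i j) f t) (funext fun s => dif_pos j.2)
  · intro j _ hj
    have : (fun s => sigExtend J x s j) = 0 := funext fun s => dif_neg hj
    rw [this, map_zero, Pi.zero_apply]

lemma aeval_sigShift_exp (p : ℝ[X]) (φ : ℂ →ₗ[ℝ] ℝ) (w z : ℂ) :
    aeval sigShift p (fun s => φ (w * z ^ s)) = fun t => φ (aeval z p * w * z ^ t) := by
  ext t
  simp only [aeval_eq_sum_range, LinearMap.sum_apply, Finset.sum_apply, Finset.sum_mul, map_sum,
    LinearMap.smul_apply, Pi.smul_apply, sigShift_pow_apply, smul_mul_assoc, map_smul]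
  simp only [pow_add, mul_comm, mul_left_comm, smul_eq_mul]

lemma matShift_exp {α β : Type*} [Fintype β] (P : Matrix α β ℝ[X]) (φ : ℂ →ₗ[ℝ] ℝ)
    (v : β → ℂ) (z : ℂ) :
    matShift P (fun t j => φ (v j * z ^ t)) = fun t i => φ ((P.map (aeval z) *ᵥ v) i * z ^ t) := by
  ext t i
  simp only [matShift_apply, aeval_sigShift_exp, mulVec, dotProduct, Finset.sum_mul, map_sum,
    Matrix.map_apply]

lemma exists_matShift_eq_zero_of_mulVec_eq_zero {α β : Type*} [Fintype β] (P : Matrix α β ℝ[X])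
    {z : ℂ} {v : β → ℂ} (hv : v ≠ 0) (hPv : P.map (aeval z) *ᵥ v = 0) :
    ∃ x : ℕ → β → ℝ, x ≠ 0 ∧ matShift P x = 0 := by
  obtain ⟨j, hj⟩ := Function.ne_iff.mp hv
  have hsol : ∀ φ : ℂ →ₗ[ℝ] ℝ, matShift P (fun t j => φ (v j * z ^ t)) = 0 := by
    intro φ
    ext t i
    simp [matShift_exp, hPv]
  by_cases hre : (v j).re = 0
  · refine ⟨_, fun h => hj (Complex.ext hre ?_), hsol Complex.imLm⟩
    simpa using congr_fun (congr_fun h 0) j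
  · refine ⟨_, fun h => hre ?_, hsol Complex.reLm⟩
    simpa using congr_fun (congr_fun h 0) j

lemma exists_sigSupp_subset_of_not_leftUnimodular {N : ℕ} (R : Matrix (Fin N) (Fin N) ℝ[X])
    {J : Finset (Fin N)} (hJ : ¬ LeftUnimodular (colSub R J)) :
    ∃ y : Signal N, y ≠ 0 ∧ matShift R y = 0 ∧ sigSupp y ⊆ J := by
  set P := colSub R J
  have hminors : Ideal.span (Set.range fun r : J → Fin N => (P.submatrix r id).det) ≠ ⊤ :=
    fun h => hJ (P.exists_mul_eq_one_of_span_det_submatrix_eq_top h)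
  obtain ⟨z, hz⟩ := Ideal.exists_aeval_eq_zero_of_ne_top (L := ℂ) hminors
  obtain ⟨v, hv0, hv⟩ := (P.map (aeval z)).exists_mulVec_eq_zero_of_forall_det_submatrix_eq_zero
    fun r => ((aeval z).map_det (P.submatrix r id)).symm.trans (hz _ (Ideal.subset_span ⟨r, rfl⟩))
  obtain ⟨x, hx0, hx⟩ := exists_matShift_eq_zero_of_mulVec_eq_zero P hv0 hv
  refine ⟨sigExtend J x, fun h => hx0 ?_, by rw [matShift_sigExtend, hx],
    sigSupp_sigExtend_subset J x⟩
  rw [← sigRestrict_sigExtend J x, h]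
  rfl

lemma eq_zero_of_sigSupp_subset_of_leftUnimodular {N : ℕ} {R : Matrix (Fin N) (Fin N) ℝ[X]}
    {J : Finset (Fin N)} (hJ : LeftUnimodular (colSub R J)) {y : Signal N}
    (hy : matShift R y = 0) (hsupp : sigSupp y ⊆ J) : y = 0 := by
  obtain ⟨G, hG⟩ := hJ
  have hx : matShift (colSub R J) (sigRestrict y J) = 0 := by
    rw [← matShift_sigExtend, sigExtend_sigRestrict hsupp, hy]
  have hrestrict : sigRestrict y J = 0 := calc
    sigRestrict y J = matShift (G * colSub R J) (sigRestrict y J) := by rw [hG, matShift_one]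
    _ = 0 := by rw [matShift_mul, hx, matShift_zero]
  rw [← sigExtend_sigRestrict hsupp, hrestrict]
  ext t i
  exact dite_eq_right_iff.mpr fun _ => rfl

lemma lt_wt_of_forall_leftUnimodular {N L : ℕ} {R : Matrix (Fin N) (Fin N) ℝ[X]} (hLN : L ≤ N)
    (hL : ∀ J : Finset (Fin N), J.card = L → LeftUnimodular (colSub R J)) {y : Signal N}
    (hy : matShift R y = 0) (hy0 : y ≠ 0) : L < wt y := by
  by_contra! hwt
  obtain ⟨J, hsupp, hJ⟩ := Finset.exists_superset_card_eq
    (s := (Set.toFinite (sigSupp y)).toFinset) (n := L)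
    (by rwa [← Set.ncard_eq_toFinset_card]) (by simpa using hLN)
  exact hy0 (eq_zero_of_sigSupp_subset_of_leftUnimodular (hL J hJ) hy
    (Set.Finite.toFinset_subset.mp hsupp))

lemma wt_le_card {N : ℕ} {y : Signal N} {J : Finset (Fin N)} (hsupp : sigSupp y ⊆ J) :
    wt y ≤ J.card :=
  (Set.ncard_le_ncard hsupp J.finite_toSet).trans_eq (Set.ncard_coe_finset J)

theorem security_index_eq_L_add_one_general {N : ℕ}
    (R : Matrix (Fin N) (Fin N) (Polynomial ℝ))
    (B : Set (Signal N)) (hB : B = {y | matShift R y = 0})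
    (L : ℕ)
    (hL : ∀ J : Finset (Fin N), J.card = L → LeftUnimodular (colSub R J))
    (hLmax : ¬ ∀ J : Finset (Fin N), J.card = L + 1 → LeftUnimodular (colSub R J)) :
    secIdx B = L + 1 := by
  subst hB
  push Not at hLmax
  obtain ⟨J, hJcard, hJ⟩ := hLmax
  have hLN : L + 1 ≤ N := by simpa [hJcard] using J.card_le_univ
  have lower : ∀ y : Signal N, matShift R y = 0 → y ≠ 0 → L + 1 ≤ wt y :=
    fun y hy hy0 => lt_wt_of_forall_leftUnimodular (by omega) hL hy hy0
  obtain ⟨y, hy0, hy, hsupp⟩ := exists_sigSupp_subset_of_not_leftUnimodular R hJ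
  have hwt : wt y = L + 1 := le_antisymm (hJcard ▸ wt_le_card hsupp) (lower y hy hy0)
  refine IsLeast.csInf_eq ⟨⟨y, hy, hy0, hwt⟩, ?_⟩
  rintro _ ⟨u, hu, hu0, rfl⟩
  exact lower u hu hu0

/-- computation of the security index: `δ(Σ) = L + 1` where `L` is
the largest integer such that every `N × L` column submatrix of `R` is left
unimodular. -/
theorem security_index_eq_L_add_one {N : ℕ}
    (R : Matrix (Fin N) (Fin N) (Polynomial ℝ)) (hdet : R.det ≠ 0)
    (B : Set (Signal N)) (hB : B = {y | matShift R y = 0})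
    (hBne : ∃ y ∈ B, y ≠ 0)
    (L : ℕ)
    (hL : ∀ J : Finset (Fin N), J.card = L → LeftUnimodular (colSub R J))
    (hLmax : ¬ ∀ J : Finset (Fin N), J.card = L + 1 → LeftUnimodular (colSub R J)) :
    secIdx B = L + 1 :=
  security_index_eq_L_add_one_general R B hB L hL hLmax
end

section
/- Let R(ξ) be an N × N polynomial matrix over ℝ[ξ] with nonzero determinant such that every N × (N−1) submatrix of R(ξ) is left unimodular. Then there exists a unimodular N × N polynomial matrix U(ξ) such that U(ξ)R(ξ) is in the Kronecker-Hermite form: its top-left (N−1) × (N−1) block is the identity I_{N−1}, its last column above the diagonal consists of entries −c_1(ξ), …, −c_{N−1}(ξ), its last row is (0, …, 0, a(ξ)), and for every j ∈ {1,…,N−1} the polynomial c_j(ξ) is coprime with a(ξ) and deg c_j(ξ) < deg a(ξ). -/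
/-!
Row reduction over the Euclidean domain `ℝ[X]` makes `R` upper triangular after multiplication
by a unimodular `U₁`. Deleting the last column of `U₁ R` leaves a matrix with a left inverse and
a zero last row, so its top-left `N × N` block `T` is unimodular. Multiplying by `diag(T⁻¹, 1)`
and then subtracting multiples of the last row reduces the last column modulo the last diagonal
entry `a`. For the resulting `U R`, the last row of a left inverse of `U R` with column `j`
deleted is a Bézout identity between `c j` and `a`.
-/

open Polynomial

open Matrix

section RowReduction

variable {K m n : Type*} [DecidableEq m]

def IsOneOutside [Zero K] [One K] (s : Set m) (U : Matrix m m K) : Prop :=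
  ∀ i j, (i ∉ s ∨ j ∉ s) → U i j = (1 : Matrix m m K) i j

namespace IsOneOutside

variable [NonAssocSemiring K] {s t : Set m} {U V : Matrix m m K}

theorem one : IsOneOutside s (1 : Matrix m m K) := fun _ _ _ => rfl

theorem mono (hU : IsOneOutside s U) (hst : s ⊆ t) : IsOneOutside t U :=
  fun i j hij => hU i j (hij.imp (fun hi h => hi (hst h)) fun hj h => hj (hst h))

variable [Fintype m]

theorem mul_apply_of_notMem (hU : IsOneOutside s U) (M : Matrix m n K) {i : m} (hi : i ∉ s)
    (j : n) : (U * M) i j = M i j := by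
  have h : (U * M) i j = ((1 : Matrix m m K) * M) i j := by
    simp only [Matrix.mul_apply]
    exact Finset.sum_congr rfl fun x _ => by rw [hU i x (Or.inl hi)]
  rw [h, Matrix.one_mul]

theorem mul_apply_of_notMem_right (hU : IsOneOutside s U) (M : Matrix n m K) (i : n) {j : m}
    (hj : j ∉ s) : (M * U) i j = M i j := by
  have h : (M * U) i j = (M * (1 : Matrix m m K)) i j := by
    simp only [Matrix.mul_apply]
    exact Finset.sum_congr rfl fun x _ => by rw [hU x j (Or.inr hj)]
  rw [h, Matrix.mul_one]

theorem mul (hU : IsOneOutside s U) (hV : IsOneOutside s V) : IsOneOutside s (U * V) := by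
  rintro i j (hi | hj)
  · rw [hU.mul_apply_of_notMem V hi, hV i j (Or.inl hi)]
  · rw [hV.mul_apply_of_notMem_right U i hj, hU i j (Or.inr hj)]

theorem mul_apply_eq_zero (hU : IsOneOutside s U) {M : Matrix m n K} {j : n}
    (hM : ∀ l ∈ s, M l j = 0) {i : m} (hi : i ∈ s) : (U * M) i j = 0 := by
  rw [Matrix.mul_apply]
  refine Finset.sum_eq_zero fun x _ => ?_
  by_cases hx : x ∈ s
  · rw [hM x hx, mul_zero]
  · rw [hU i x (Or.inr hx), Matrix.one_apply_ne (by rintro rfl; exact hx hi), zero_mul]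

end IsOneOutside

theorem isOneOutside_transvection [CommRing K] {s : Set m} {i k : m} (hi : i ∈ s) (hk : k ∈ s)
    (c : K) : IsOneOutside s (transvection i k c) := by
  intro a b hab
  rw [transvection, Matrix.add_apply, Matrix.single_apply, if_neg, add_zero]
  rintro ⟨rfl, rfl⟩
  exact hab.elim (· hi) (· hk)

theorem isOneOutside_swap [NonAssocSemiring K] {s : Set m} {i k : m} (hi : i ∈ s) (hk : k ∈ s) :
    IsOneOutside s ((Equiv.swap i k).permMatrix K) := by
  have hfix : ∀ a ∉ s, Equiv.swap i k a = a := fun a ha =>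
    Equiv.swap_apply_of_ne_of_ne (by rintro rfl; exact ha hi) (by rintro rfl; exact ha hk)
  intro a b hab
  simp only [Equiv.Perm.permMatrix, PEquiv.toMatrix_apply, Equiv.toPEquiv_apply,
    Option.mem_some_iff, Matrix.one_apply]
  rcases hab with ha | hb
  · rw [hfix a ha]
  · simp only [Equiv.swap_apply_eq_iff, hfix b hb]

variable [Fintype m] [EuclideanDomain K]

theorem exists_isUnit_isOneOutside_mul_apply_eq_zero (M : Matrix m n K) {i k : m} (hik : i ≠ k)
    (c : n) : ∃ U : Matrix m m K, IsUnit U ∧ IsOneOutside {i, k} U ∧ (U * M) k c = 0 := by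
  obtain ⟨b, hb⟩ : ∃ b, M k c = b := ⟨_, rfl⟩
  induction b using (EuclideanDomain.r_wellFounded (R := K)).induction generalizing M with
  | _ b ih =>
  rcases eq_or_ne b 0 with rfl | hb0
  · exact ⟨1, isUnit_one, IsOneOutside.one, by rwa [Matrix.one_mul]⟩
  set T := transvection i k (-(M i c / b))
  set P := (Equiv.swap i k).permMatrix K
  have hPTM : (P * (T * M)) k c = M i c % b := by
    rw [PEquiv.toMatrix_toPEquiv_mul, submatrix_apply, Equiv.swap_apply_right, id,
      transvection_mul_apply_same, hb, EuclideanDomain.mod_eq_sub_mul_div]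
    ring
  obtain ⟨U, hU, hUs, hUc⟩ := ih _ (EuclideanDomain.mod_lt _ hb0) _ hPTM
  have hT : IsUnit T :=
    (isUnit_iff_isUnit_det _).2 (by rw [det_transvection_of_ne _ _ hik]; exact isUnit_one)
  have hP : IsUnit P := (isUnit_iff_isUnit_det _).2 (by simp [P, hik])
  refine ⟨U * P * T, (hU.mul hP).mul hT, ?_, by rwa [Matrix.mul_assoc, Matrix.mul_assoc]⟩
  exact (hUs.mul (isOneOutside_swap (by simp) (by simp))).mul
    (isOneOutside_transvection (by simp) (by simp) _)

theorem exists_isUnit_isOneOutside_forall_mem_mul_apply_eq_zero (M : Matrix m n K) (p : m) (c : n)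
    (s : Finset m) (hp : p ∉ s) :
    ∃ U : Matrix m m K, IsUnit U ∧ IsOneOutside (insert p ↑s) U ∧ ∀ k ∈ s, (U * M) k c = 0 := by
  induction s using Finset.induction_on with
  | empty => exact ⟨1, isUnit_one, IsOneOutside.one, by simp⟩
  | insert k s hks ih =>
    obtain ⟨U₁, hU₁, hU₁s, hU₁c⟩ := ih (fun h => hp (Finset.mem_insert_of_mem h))
    have hpk : p ≠ k := by rintro rfl; exact hp (Finset.mem_insert_self p s)
    obtain ⟨U₂, hU₂, hU₂s, hU₂c⟩ := exists_isUnit_isOneOutside_mul_apply_eq_zero (U₁ * M) hpk c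
    refine ⟨U₂ * U₁, hU₂.mul hU₁, (hU₂s.mono ?_).mul (hU₁s.mono ?_), fun l hl => ?_⟩
    · simp [Set.insert_subset_iff]
    · exact Set.insert_subset_insert (by simp [Set.subset_insert])
    rw [Matrix.mul_assoc]
    rcases Finset.mem_insert.1 hl with rfl | hls
    · exact hU₂c
    · have hlpk : l ∉ ({p, k} : Set m) := by
        rintro (rfl | rfl)
        exacts [hp (Finset.mem_insert_of_mem hls), hks hls]
      rw [hU₂s.mul_apply_of_notMem _ hlpk, hU₁c l hls]

theorem exists_isUnit_mul_blockTriangular {n : ℕ} (M : Matrix (Fin n) (Fin n) K) :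
    ∃ U : Matrix (Fin n) (Fin n) K, IsUnit U ∧ (U * M).BlockTriangular id := by
  suffices h : ∀ t : ℕ, ∃ U : Matrix (Fin n) (Fin n) K, IsUnit U ∧
      ∀ i j : Fin n, j < i → (j : ℕ) < t → (U * M) i j = 0 by
    obtain ⟨U, hU, h⟩ := h n
    exact ⟨U, hU, fun i j hji => h i j hji j.isLt⟩
  intro t
  induction t with
  | zero => exact ⟨1, isUnit_one, fun _ _ _ h => absurd h (Nat.not_lt_zero _)⟩
  | succ t ih =>
    obtain ⟨U₁, hU₁, hU₁M⟩ := ih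
    by_cases ht : t < n
    swap
    · exact ⟨U₁, hU₁, fun i j hji _ => hU₁M i j hji (by omega)⟩
    set p : Fin n := ⟨t, ht⟩
    obtain ⟨U₂, hU₂, hU₂s, hU₂c⟩ :=
      exists_isUnit_isOneOutside_forall_mem_mul_apply_eq_zero (U₁ * M) p p (Finset.Ioi p) (by simp)
    refine ⟨U₂ * U₁, hU₂.mul hU₁, fun i j hji hjt => ?_⟩
    rw [Matrix.mul_assoc]
    rcases Nat.lt_succ_iff_lt_or_eq.1 hjt with hjt | hjt
    · by_cases hi : i ∈ insert p (↑(Finset.Ioi p) : Set (Fin n))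
      · refine hU₂s.mul_apply_eq_zero (fun l hl => hU₁M l j ?_ hjt) hi
        simp only [Finset.coe_Ioi, Set.Ioi_insert, Set.mem_Ici, p] at hl
        exact Fin.lt_def.2 (lt_of_lt_of_le hjt (Fin.le_def.1 hl))
      · rw [hU₂s.mul_apply_of_notMem _ hi]
        exact hU₁M i j hji hjt
    · obtain rfl : j = p := Fin.ext hjt
      exact hU₂c i (Finset.mem_Ioi.2 hji)

end RowReduction

section BlockUpper

variable {R : Type*} [CommRing R] {n : ℕ}

def blockUpper (B : Matrix (Fin n) (Fin n) R) (q : Fin n → R) (d : R) :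
    Matrix (Fin (n + 1)) (Fin (n + 1)) R :=
  Matrix.of fun i j =>
    Fin.lastCases (Fin.lastCases d (fun _ => 0) j) (fun i => Fin.lastCases (q i) (B i) j) i

variable (B : Matrix (Fin n) (Fin n) R) (q : Fin n → R) (d : R)

@[simp] theorem blockUpper_apply_castSucc_castSucc (i j : Fin n) :
    blockUpper B q d i.castSucc j.castSucc = B i j := by simp [blockUpper]

@[simp] theorem blockUpper_apply_castSucc_last (i : Fin n) :
    blockUpper B q d i.castSucc (Fin.last n) = q i := by simp [blockUpper]

@[simp] theorem blockUpper_apply_last_castSucc (j : Fin n) :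
    blockUpper B q d (Fin.last n) j.castSucc = 0 := by simp [blockUpper]

@[simp] theorem blockUpper_apply_last_last : blockUpper B q d (Fin.last n) (Fin.last n) = d := by
  simp [blockUpper]

@[simp] theorem submatrix_castSucc_blockUpper :
    (blockUpper B q d).submatrix Fin.castSucc Fin.castSucc = B := by
  ext i j
  simp

theorem blockUpper_mul (B' : Matrix (Fin n) (Fin n) R) (q' : Fin n → R) (d' : R) :
    blockUpper B q d * blockUpper B' q' d' = blockUpper (B * B') (B *ᵥ q' + d' • q) (d * d') := by
  ext i j
  induction i using Fin.lastCases <;> induction j using Fin.lastCases <;>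
    simp [Matrix.mul_apply, Fin.sum_univ_castSucc, mulVec, dotProduct, mul_comm]

theorem det_blockUpper : (blockUpper B q d).det = B.det * d := by
  rw [det_succ_row _ (Fin.last n), Fin.sum_univ_castSucc]
  simp [Fin.succAbove_last, mul_comm]

theorem isUnit_blockUpper {B : Matrix (Fin n) (Fin n) R} (hB : IsUnit B) {d : R} (hd : IsUnit d) :
    IsUnit (blockUpper B q d) := by
  rw [isUnit_iff_isUnit_det, det_blockUpper]
  exact ((isUnit_iff_isUnit_det B).1 hB).mul hd

theorem vecMul_blockUpper_castSucc (y : Fin (n + 1) → R) (j : Fin n) :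
    (y ᵥ* blockUpper B q d) j.castSucc = ((fun i => y i.castSucc) ᵥ* B) j := by
  simp [vecMul, dotProduct, Fin.sum_univ_castSucc]

theorem vecMul_blockUpper_last (y : Fin (n + 1) → R) :
    (y ᵥ* blockUpper B q d) (Fin.last n) = (fun i => y i.castSucc) ⬝ᵥ q + y (Fin.last n) * d := by
  simp [vecMul, dotProduct, Fin.sum_univ_castSucc]

theorem eq_blockUpper_of_apply_last_castSucc {M : Matrix (Fin (n + 1)) (Fin (n + 1)) R}
    (hM : ∀ j : Fin n, M (Fin.last n) j.castSucc = 0) :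
    M = blockUpper (M.submatrix Fin.castSucc Fin.castSucc) (fun i => M i.castSucc (Fin.last n))
      (M (Fin.last n) (Fin.last n)) := by
  ext i j
  induction i using Fin.lastCases <;> induction j using Fin.lastCases <;> simp [hM]

end BlockUpper

section LeftUnimodular

variable {N : ℕ}

theorem LeftUnimodular.colSub_mul_of_isUnit {R U : Matrix (Fin N) (Fin N) ℝ[X]} {J : Finset (Fin N)}
    (h : LeftUnimodular (colSub R J)) (hU : IsUnit U) : LeftUnimodular (colSub (U * R) J) := by
  obtain ⟨G, hG⟩ := h
  obtain ⟨V, hV⟩ := hU.exists_left_inv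
  refine ⟨G * V, ?_⟩
  change G * V * (U * colSub R J) = 1
  rw [Matrix.mul_assoc, ← Matrix.mul_assoc V, hV, Matrix.one_mul, hG]

theorem LeftUnimodular.exists_vecMul_colSub {M : Matrix (Fin N) (Fin N) ℝ[X]}
    {J : Finset (Fin N)} (h : LeftUnimodular (colSub M J)) {k : Fin N} (hk : k ∈ J) :
    ∃ y : Fin N → ℝ[X], ∀ l ∈ J, (y ᵥ* M) l = if l = k then 1 else 0 := by
  obtain ⟨G, hG⟩ := h
  refine ⟨G ⟨k, hk⟩, fun l hl => ?_⟩
  change (G * colSub M J) ⟨k, hk⟩ ⟨l, hl⟩ = _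
  rw [hG, Matrix.one_apply]
  simp [Subtype.ext_iff, eq_comm]

theorem isUnit_of_leftUnimodular_colSub_blockUpper {B : Matrix (Fin N) (Fin N) ℝ[X]}
    {q : Fin N → ℝ[X]} {d : ℝ[X]}
    (h : LeftUnimodular (colSub (blockUpper B q d) {Fin.last N}ᶜ)) : IsUnit B := by
  have hmem : ∀ i : Fin N, i.castSucc ∈ ({Fin.last N}ᶜ : Finset (Fin (N + 1))) := fun i => by
    simp [Fin.castSucc_ne_last]
  choose y hy using fun i : Fin N => h.exists_vecMul_colSub (hmem i)
  rw [isUnit_iff_isUnit_det]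
  refine isUnit_det_of_left_inverse (B := Matrix.of fun i m => y i m.castSucc) ?_
  refine Matrix.ext fun i j => ?_
  change ((fun m => y i m.castSucc) ᵥ* B) j = _
  rw [← vecMul_blockUpper_castSucc B q d, hy i j.castSucc (hmem j)]
  simp [Matrix.one_apply, eq_comm]

theorem isCoprime_of_leftUnimodular_colSub_blockUpper {r : Fin N → ℝ[X]} {a : ℝ[X]} {j : Fin N}
    (h : LeftUnimodular (colSub (blockUpper 1 r a) {j.castSucc}ᶜ)) : IsCoprime (r j) a := by
  obtain ⟨y, hy⟩ :=
    h.exists_vecMul_colSub (k := Fin.last N) (by simpa using (Fin.castSucc_ne_last j).symm)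
  have hy' : (fun i => y i.castSucc) = Pi.single j (y j.castSucc) := by
    funext i
    rcases eq_or_ne i j with rfl | hij
    · simp
    · have h := hy i.castSucc (by simpa using hij)
      rw [vecMul_blockUpper_castSucc, vecMul_one] at h
      simp [hij, h, Fin.castSucc_ne_last]
  refine ⟨y j.castSucc, y (Fin.last N), ?_⟩
  have h := hy (Fin.last N) (by simp [(Fin.castSucc_ne_last j).symm])
  rwa [vecMul_blockUpper_last, hy', single_dotProduct, if_pos rfl] at h

end LeftUnimodular

theorem exists_isUnit_mul_blockUpper_eq_blockUpper_one {K : Type*} [EuclideanDomain K] {n : ℕ}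
    {T : Matrix (Fin n) (Fin n) K} (hT : IsUnit T) (u : Fin n → K) (a : K) :
    ∃ W, IsUnit W ∧ W * blockUpper T u a = blockUpper 1 (fun i => (T⁻¹ *ᵥ u) i % a) a := by
  have hdet := (isUnit_iff_isUnit_det T).1 hT
  refine ⟨blockUpper 1 (fun i => -((T⁻¹ *ᵥ u) i / a)) 1 * blockUpper T⁻¹ 0 1,
    (isUnit_blockUpper _ isUnit_one isUnit_one).mul
      (isUnit_blockUpper _ (isUnit_nonsing_inv_iff.2 hT) isUnit_one), ?_⟩
  rw [Matrix.mul_assoc, blockUpper_mul, blockUpper_mul, nonsing_inv_mul _ hdet]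
  congr 1
  · simp
  · ext i
    simp [EuclideanDomain.mod_eq_sub_mul_div, sub_eq_add_neg, mul_comm]
  · simp

/-- Kronecker-Hermite canonical kernel representation of a
maximally secure system (matrix size `N + 1`). -/
theorem kronecker_hermite_max_secure {N : ℕ}
    (R : Matrix (Fin (N + 1)) (Fin (N + 1)) (Polynomial ℝ)) (hdet : R.det ≠ 0)
    (hsub : ∀ i : Fin (N + 1), LeftUnimodular (colSub R ({i}ᶜ : Finset (Fin (N + 1))))) :
    ∃ (U : Matrix (Fin (N + 1)) (Fin (N + 1)) (Polynomial ℝ))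
      (c : Fin N → Polynomial ℝ) (a : Polynomial ℝ),
      (∃ V : Matrix (Fin (N + 1)) (Fin (N + 1)) (Polynomial ℝ), U * V = 1 ∧ V * U = 1) ∧
      (∀ i j : Fin N, (U * R) i.castSucc j.castSucc = if i = j then 1 else 0) ∧
      (∀ i : Fin N, (U * R) i.castSucc (Fin.last N) = -c i) ∧
      (∀ j : Fin N, (U * R) (Fin.last N) j.castSucc = 0) ∧
      (U * R) (Fin.last N) (Fin.last N) = a ∧
      (∀ j : Fin N, IsCoprime (c j) a ∧ (c j).degree < a.degree) := by
  obtain ⟨U₁, hU₁, htri⟩ := exists_isUnit_mul_blockTriangular R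
  obtain ⟨T, u, a, hM⟩ : ∃ T u a, U₁ * R = blockUpper T u a :=
    ⟨_, _, _, eq_blockUpper_of_apply_last_castSucc fun j => htri (Fin.castSucc_lt_last j)⟩
  have hT : IsUnit T :=
    isUnit_of_leftUnimodular_colSub_blockUpper (hM ▸ (hsub (Fin.last N)).colSub_mul_of_isUnit hU₁)
  have ha : a ≠ 0 := by
    have h := congrArg det hM
    rw [det_mul, det_blockUpper] at h
    exact right_ne_zero_of_mul (h ▸ mul_ne_zero ((isUnit_iff_isUnit_det U₁).1 hU₁).ne_zero hdet)
  obtain ⟨W, hW, hWM⟩ := exists_isUnit_mul_blockUpper_eq_blockUpper_one hT u a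
  have hUR : W * U₁ * R = blockUpper 1 (fun i => (T⁻¹ *ᵥ u) i % a) a := by
    rw [Matrix.mul_assoc, hM, hWM]
  refine ⟨W * U₁, fun i => -((T⁻¹ *ᵥ u) i % a), a, ?_, fun i j => ?_, fun i => ?_, fun j => ?_,
    ?_, fun j => ⟨?_, ?_⟩⟩
  · have h := (isUnit_iff_isUnit_det _).1 (hW.mul hU₁)
    exact ⟨_, mul_nonsing_inv _ h, nonsing_inv_mul _ h⟩
  · simp [hUR, one_apply]
  · simp [hUR]
  · simp [hUR]
  · simp [hUR]
  · have h := (hsub j.castSucc).colSub_mul_of_isUnit (hW.mul hU₁)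
    rw [hUR] at h
    exact (isCoprime_of_leftUnimodular_colSub_blockUpper h).neg_left
  · rw [degree_neg]
    exact degree_mod_lt _ ha
end

section
/- Consider the maximally secure system with outputs y = (y_1,…,y_N) described by y_j = c_j(σ)y_N for j = 1,…,N−1 and a(σ)y_N = 0, where a(ξ), c_1(ξ),…,c_{N−1}(ξ) ∈ ℝ[ξ] and for each j there exist p_j(ξ), q_j(ξ) ∈ ℝ[ξ] with p_j(ξ)c_j(ξ) + q_j(ξ)a(ξ) = 1; set p_N(ξ) := 1. Let r = y + η where η is an attack signal with ‖η‖ < N/2. Define the candidate signals v_j := p_j(σ)r_j for j = 1,…,N. Then the number of indices j ∈ {1,…,N} with v_j = y_N is strictly greater than N/2; consequently y_N is the unique signal attaining a strict majority among v_1,…,v_N, and the full output y is recovered via y_j = c_j(σ)y_N for j = 1,…,N−1. -/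
open Polynomial

lemma polyShift_add (a b : Polynomial ℝ) (y : ℕ → ℝ) :
    polyShift (a + b) y = polyShift a y + polyShift b y := by
  funext t
  show (a + b).sum (fun k c => c * y (t + k)) = _
  rw [Polynomial.sum_add_index] <;> simp [add_mul, polyShift]

lemma polyShift_monomial (n : ℕ) (c : ℝ) (y : ℕ → ℝ) :
    polyShift (monomial n c) y = fun t => c * y (t + n) := by
  funext t
  show (monomial n c).sum (fun k d => d * y (t + k)) = _
  rw [Polynomial.sum_monomial_index] ; simp

lemma polyShift_one (y : ℕ → ℝ) : polyShift 1 y = y := by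
  have : (1 : Polynomial ℝ) = monomial 0 1 := by simp
  rw [this, polyShift_monomial]; simp

lemma polyShift_sig_add (a : Polynomial ℝ) (f g : ℕ → ℝ) :
    polyShift a (f + g) = polyShift a f + polyShift a g := by
  funext t
  simp only [polyShift, Polynomial.sum, Pi.add_apply, mul_add, Finset.sum_add_distrib]

lemma polyShift_sig_zero (a : Polynomial ℝ) (f : ℕ → ℝ) (hf : ∀ t, f t = 0) :
    polyShift a f = 0 := by
  funext t
  simp [polyShift, Polynomial.sum, hf]

lemma polyShift_mul (a b : Polynomial ℝ) (y : ℕ → ℝ) :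
    polyShift (a * b) y = polyShift a (polyShift b y) := by
  induction a using Polynomial.induction_on' with
  | add u v hu hv =>
    rw [add_mul, polyShift_add, polyShift_add, hu, hv]
  | monomial n cn =>
    induction b using Polynomial.induction_on' with
    | add u v hu hv =>
      rw [mul_add, polyShift_add, hu, hv, polyShift_add, polyShift_sig_add]
    | monomial m cm =>
      rw [Polynomial.monomial_mul_monomial, polyShift_monomial, polyShift_monomial,
        polyShift_monomial]
      funext t
      simp [mul_assoc, add_assoc]

/-- attack correction for a maximally secure system with `N + 1`
outputs: the correct signal `y_N` wins a strict majority vote among the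
observer outputs `v j = p j (σ) r j`. -/
theorem max_secure_majority_correction {N : ℕ}
    (a : Polynomial ℝ) (c : Fin N → Polynomial ℝ)
    (p : Fin (N + 1) → Polynomial ℝ) (q : Fin N → Polynomial ℝ)
    (hbez : ∀ j : Fin N, p j.castSucc * c j + q j * a = 1)
    (hpN : p (Fin.last N) = 1)
    (y : Signal (N + 1))
    (hout : ∀ j : Fin N,
      (fun t => y t j.castSucc) = polyShift (c j) (fun t => y t (Fin.last N)))
    (ha : polyShift a (fun t => y t (Fin.last N)) = 0)
    (η : Signal (N + 1)) (hη : (wt η : ℝ) < (N + 1 : ℝ) / 2)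
    (r : Signal (N + 1)) (hr : r = y + η)
    (v : Fin (N + 1) → ℕ → ℝ)
    (hv : ∀ j : Fin (N + 1), v j = polyShift (p j) (fun t => r t j)) :
    ((({j : Fin (N + 1) | v j = fun t => y t (Fin.last N)}).ncard : ℝ) > (N + 1 : ℝ) / 2) ∧
    (∀ z : ℕ → ℝ, z ≠ (fun t => y t (Fin.last N)) →
      {j : Fin (N + 1) | v j = z}.ncard <
        {j : Fin (N + 1) | v j = fun t => y t (Fin.last N)}.ncard) := by
  set yN : ℕ → ℝ := fun t => y t (Fin.last N) with hyN
  -- key: v j agrees with yN applied to the clean output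
  have hclean : ∀ j : Fin (N + 1), polyShift (p j) (fun t => y t j) = yN := by
    intro j
    induction j using Fin.lastCases with
    | last => rw [hpN, polyShift_one]
    | cast j =>
      rw [hout j, ← polyShift_mul]
      have : polyShift (p j.castSucc * c j) yN
          = polyShift (p j.castSucc * c j + q j * a) yN - polyShift (q j * a) yN := by
        rw [polyShift_add]; ring
      rw [this, hbez j, polyShift_one, polyShift_mul, ha,
        polyShift_sig_zero (q j) 0 (fun _ => rfl)]
      funext t; simp
  have hkey : ∀ j : Fin (N + 1), (∀ t, η t j = 0) → v j = yN := by
    intro j hj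
    have hrj : (fun t => r t j) = (fun t => y t j) + (fun t => η t j) := by
      funext t; rw [hr]; rfl
    rw [hv j, hrj, polyShift_sig_add, polyShift_sig_zero _ _ hj, hclean j]
    funext t; simp
  -- counting
  set S : Set (Fin (N + 1)) := {j | v j = yN} with hS
  have hsub : Sᶜ ⊆ sigSupp η := by
    intro j hj
    simp only [hS, Set.mem_compl_iff, Set.mem_setOf_eq] at hj
    intro hall
    exact hj (hkey j hall)
  have hScompl : Sᶜ.ncard ≤ wt η := Set.ncard_le_ncard hsub (Set.toFinite _)
  have hsum : S.ncard + Sᶜ.ncard = N + 1 := by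
    rw [Set.ncard_add_ncard_compl]
    simp
  have hSbig : ((S.ncard : ℝ)) > (N + 1 : ℝ) / 2 := by
    have h1 : (S.ncard : ℝ) + (Sᶜ.ncard : ℝ) = (N : ℝ) + 1 := by
      exact_mod_cast congrArg (Nat.cast : ℕ → ℝ) hsum
    have h2 : ((Sᶜ.ncard : ℝ)) ≤ (wt η : ℝ) := by exact_mod_cast hScompl
    linarith
  refine ⟨hSbig, ?_⟩
  intro z hz
  have hzsub : {j : Fin (N + 1) | v j = z} ⊆ Sᶜ := by
    intro j hj
    simp only [Set.mem_setOf_eq] at hj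
    simp only [hS, Set.mem_compl_iff, Set.mem_setOf_eq]
    rw [hj]; exact hz
  have h3 : {j : Fin (N + 1) | v j = z}.ncard ≤ Sᶜ.ncard :=
    Set.ncard_le_ncard hzsub (Set.toFinite _)
  have h4 : ((Sᶜ.ncard : ℝ)) ≤ (wt η : ℝ) := by exact_mod_cast hScompl
  have : (({j : Fin (N + 1) | v j = z}.ncard : ℝ)) < (S.ncard : ℝ) := by
    have := hzsub
    have h5 : (({j : Fin (N + 1) | v j = z}.ncard : ℝ)) ≤ (Sᶜ.ncard : ℝ) := by
      exact_mod_cast h3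
    linarith
  exact_mod_cast this
end

section
/- Let R(ξ) be an N × N polynomial matrix over ℝ[ξ] with nonzero determinant, and let L be the largest integer such that for every subset J ⊆ {1,…,N} of cardinality L the N × L submatrix R_J(ξ) is left unimodular. Then there exists a unimodular N × N polynomial matrix U(ξ) such that U(ξ)R(ξ) has the block form [[I_L, −M_1(ξ)], [0, D(ξ)]], where D(ξ) is an (N−L) × (N−L) upper triangular polynomial matrix and, for each i ∈ {1,…,N−L}, the degree of the diagonal entry d_ii(ξ) of D(ξ) is strictly greater than the degree of every other entry in the corresponding column of U(ξ)R(ξ). -/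
open Polynomial

/-!
Row operations over `K[X]` bring `R` to Hermite form `H = U * R`: Bezout `2 × 2` row operations
make it upper triangular, scaling the rows makes the diagonal monic, and subtracting multiples of
row `a` (division with remainder by `H a a`) lowers the degrees of the entries above each diagonal
entry. Left unimodularity of the first `L` columns of `R` passes to `H`, whose first `L` columns
vanish below row `L`. Hence the leading `L × L` block of `H` has a left inverse, so its
determinant, the product of its diagonal entries, is a unit; being monic, these entries are `1`,
and the degree condition forces the other entries of their columns to vanish.
-/

theorem EuclideanDomain.exists_mul_sub_mul_eq_one_and_mul_add_mul_eq_zero {R : Type*}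
    [EuclideanDomain R] (a b : R) :
    ∃ p q r s : R, p * s - q * r = 1 ∧ r * a + s * b = 0 := by
  classical
  by_cases hg : gcd a b = 0
  · obtain ⟨rfl, rfl⟩ := EuclideanDomain.gcd_eq_zero_iff.mp hg
    exact ⟨1, 0, 0, 1, by ring, by ring⟩
  obtain ⟨a', ha'⟩ := gcd_dvd_left a b
  obtain ⟨b', hb'⟩ := gcd_dvd_right a b
  refine ⟨gcdA a b, gcdB a b, -b', a', mul_left_cancel₀ hg ?_, ?_⟩
  · linear_combination -gcd_eq_gcd_ab a b - gcdA a b * ha' - gcdB a b * hb'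
  · linear_combination -b' * ha' + a' * hb'

namespace Matrix

section Ring

variable {R : Type*} [Ring R] {n m : Type*} [Fintype n] [DecidableEq n]

theorem exists_isUnit_mul_eq_sub_vecMulVec (M : Matrix n m R) {a : n} {u : n → R} (hu : u a = 0) :
    ∃ T : Matrix n n R, IsUnit T ∧ T * M = M - vecMulVec u (M.row a) := by
  refine ⟨1 - vecMulVec u (Pi.single a 1), IsNilpotent.isUnit_one_sub ⟨2, ?_⟩, ?_⟩
  · rw [pow_two, vecMulVec_mul_vecMulVec]
    simp [hu]
  · rw [Matrix.sub_mul, Matrix.one_mul, vecMulVec_mul, single_one_vecMul]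

end Ring

section CommRing

variable {R : Type*} [CommRing R] {n m : Type*} [Fintype n] [DecidableEq n]

def twoRowOp (i k : n) (p q r s : R) : Matrix n n R :=
  of fun a b =>
    if a = i then (if b = i then p else if b = k then q else 0)
    else if a = k then (if b = i then r else if b = k then s else 0)
    else if a = b then 1 else 0

variable {i k : n} {p q r s : R}

theorem twoRowOp_mul_apply (hik : i ≠ k) (M : Matrix n m R) (a : n) (b : m) :
    (twoRowOp i k p q r s * M) a b =
      if a = i then p * M i b + q * M k b
      else if a = k then r * M i b + s * M k b
      else M a b := by
  rw [mul_apply]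
  split_ifs with hai hak
  · rw [Fintype.sum_eq_add i k hik fun c hc => by simp [twoRowOp, hai, hc.1, hc.2]]
    simp [twoRowOp, hai, hik.symm]
  · rw [Fintype.sum_eq_add i k hik fun c hc => by simp [twoRowOp, hak, hc.1, hc.2]]
    simp [twoRowOp, hak, hik.symm]
  · rw [Fintype.sum_eq_single a fun c hc => by simp [twoRowOp, hai, hak, Ne.symm hc]]
    simp [twoRowOp, hai, hak]

theorem isUnit_twoRowOp (hik : i ≠ k) (h : p * s - q * r = 1) :
    IsUnit (twoRowOp i k p q r s) := by
  refine (isUnit_iff_isUnit_det _).mpr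
    (isUnit_det_of_right_inverse (B := twoRowOp i k s (-q) (-r) p) ?_)
  ext a b
  rw [twoRowOp_mul_apply hik]
  simp only [twoRowOp, of_apply, one_apply]
  split_ifs <;> subst_vars <;> simp_all <;> first | linear_combination h | linear_combination

end CommRing

section EuclideanDomain

variable {R : Type*} [EuclideanDomain R] {n m : Type*} [Fintype n]

theorem exists_isUnit_mul_apply_eq_zero [DecidableEq n] (A : Matrix n m R) (c : m) {i₀ : n}
    {S : Finset n} (hS : i₀ ∉ S) :
    ∃ U : Matrix n n R, IsUnit U ∧ (∀ i ∈ S, (U * A) i c = 0) ∧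
      (∀ i ∉ insert i₀ S, (U * A) i = A i) ∧
      ∀ j, (∀ i ∈ insert i₀ S, A i j = 0) → ∀ i ∈ insert i₀ S, (U * A) i j = 0 := by
  induction S using Finset.induction_on with
  | empty => exact ⟨1, isUnit_one, by simp, by simp, by simp⟩
  | insert k S hkS ih =>
    obtain ⟨hi₀k, hi₀S⟩ : i₀ ≠ k ∧ i₀ ∉ S := by simpa using hS
    obtain ⟨U, hU, hzero, hrows, hpattern⟩ := ih hi₀S
    have hk : (U * A) k = A k := hrows k (by simp [hkS, Ne.symm hi₀k])
    obtain ⟨p, q, r, s, hdet, hkill⟩ :=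
      EuclideanDomain.exists_mul_sub_mul_eq_one_and_mul_add_mul_eq_zero
        ((U * A) i₀ c) ((U * A) k c)
    refine ⟨twoRowOp i₀ k p q r s * U, (isUnit_twoRowOp hi₀k hdet).mul hU, ?_, ?_, ?_⟩
    · intro i hi
      rw [Matrix.mul_assoc, twoRowOp_mul_apply hi₀k]
      rcases Finset.mem_insert.mp hi with rfl | hi
      · simpa [Ne.symm hi₀k] using hkill
      · have : i ≠ i₀ := fun h => hi₀S (h ▸ hi)
        have : i ≠ k := fun h => hkS (h ▸ hi)
        simp [*, hzero i hi]
    · intro i hi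
      obtain ⟨hii₀, hik, hiS⟩ : i ≠ i₀ ∧ i ≠ k ∧ i ∉ S := by simpa using hi
      ext j
      rw [Matrix.mul_assoc, twoRowOp_mul_apply hi₀k, if_neg hii₀, if_neg hik]
      exact congrFun (hrows i (by simp [hii₀, hiS])) j
    · intro j hj i hi
      have hB : ∀ i ∈ insert i₀ S, (U * A) i j = 0 :=
        hpattern j fun i hi => hj i (by aesop)
      have hBk : (U * A) k j = 0 := by rw [hk]; exact hj k (by simp)
      rw [Matrix.mul_assoc, twoRowOp_mul_apply hi₀k]
      split_ifs with h1 h2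
      · simp [hB i₀ (by simp), hBk]
      · simp [hB i₀ (by simp), hBk]
      · exact hB i (by aesop)

theorem exists_isUnit_mul_isUpperTriangular [LinearOrder n] (A : Matrix n n R) :
    ∃ U : Matrix n n R, IsUnit U ∧ (U * A).IsUpperTriangular := by
  suffices ∀ s : Finset n, ∃ U : Matrix n n R, IsUnit U ∧
      ∀ j ∈ s, ∀ i, j < i → (U * A) i j = 0 by
    obtain ⟨U, hU, h⟩ := this Finset.univ
    exact ⟨U, hU, fun i j hji => h j (Finset.mem_univ j) i hji⟩
  intro s
  induction s using Finset.induction_on_max with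
  | empty => exact ⟨1, isUnit_one, by simp⟩
  | insert a s hs ih =>
    obtain ⟨U, hU, hzero⟩ := ih
    have hlower : insert a ({i | a < i} : Finset n) = ({i | a ≤ i} : Finset n) := by
      ext i
      simp [le_iff_lt_or_eq', or_comm]
    obtain ⟨V, hV, hcol, hrows, hpattern⟩ :=
      exists_isUnit_mul_apply_eq_zero (U * A) a (i₀ := a) (S := {i | a < i}) (by simp)
    rw [hlower] at hrows hpattern
    refine ⟨V * U, hV.mul hU, fun j hj i hji => ?_⟩
    rw [Matrix.mul_assoc]
    rcases Finset.mem_insert.mp hj with rfl | hj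
    · exact hcol i (by simpa using hji)
    · by_cases hai : a ≤ i
      · refine hpattern j (fun i' hi' => hzero j hj i' ?_) i (by simpa using hai)
        exact (hs j hj).trans_le (by simpa using hi')
      · rw [hrows i (by simpa using hai)]
        exact hzero j hj i hji

end EuclideanDomain

structure IsHermiteForm {n R : Type*} [LT n] [Semiring R] (M : Matrix n n R[X]) : Prop where
  isUpperTriangular : M.IsUpperTriangular
  monic : ∀ j, (M j j).Monic
  degree_lt : ∀ i j, i ≠ j → (M i j).degree < (M j j).degree

theorem IsHermiteForm.apply_eq_ite_of_isUnit {n R : Type*} [LT n] [DecidableEq n] [CommRing R]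
    [Nontrivial R] {M : Matrix n n R[X]} (hH : M.IsHermiteForm) {j : n} (hj : IsUnit (M j j))
    (i : n) : M i j = if i = j then 1 else 0 := by
  have hjj : M j j = 1 := (hH.monic j).isUnit_iff.mp hj
  split_ifs with hij
  · rw [hij, hjj]
  · simpa [hjj] using hH.degree_lt i j hij

section Field

variable {K : Type*} [Field K] {n : Type*} [Fintype n] [LinearOrder n]

theorem exists_isUnit_mul_monic_diag {M : Matrix n n K[X]} (hM : M.IsUpperTriangular)
    (hdet : M.det ≠ 0) :
    ∃ D : Matrix n n K[X], IsUnit D ∧ (D * M).IsUpperTriangular ∧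
      ∀ j, ((D * M) j j).Monic := by
  rw [det_of_isUpperTriangular hM, Finset.prod_ne_zero_iff] at hdet
  have hlc : ∀ j, (M j j).leadingCoeff ≠ 0 := fun j => by simpa using hdet j (Finset.mem_univ j)
  refine ⟨diagonal fun i => C (M i i).leadingCoeff⁻¹, ?_, (blockTriangular_diagonal _).mul hM,
    fun j => ?_⟩
  · exact isUnit_diagonal.mpr (Pi.isUnit_iff.mpr fun i => isUnit_C.mpr (by simpa using hlc i))
  · rw [diagonal_mul]
    exact monic_C_mul_of_mul_leadingCoeff_eq_one (inv_mul_cancel₀ (hlc j))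

theorem exists_isUnit_mul_reduce_column {M : Matrix n n K[X]} (hM : M.IsUpperTriangular) {a : n}
    (ha : (M a a).Monic) :
    ∃ T : Matrix n n K[X], IsUnit T ∧ (∀ i j, a ≤ i ∨ j < a → (T * M) i j = M i j) ∧
      ∀ i, i ≠ a → ((T * M) i a).degree < (M a a).degree := by
  obtain ⟨T, hT, hTM⟩ := exists_isUnit_mul_eq_sub_vecMulVec M (a := a)
    (u := fun i => if i < a then M i a /ₘ M a a else 0) (by simp)
  have hTM_apply : ∀ i j, (T * M) i j = M i j - (if i < a then M i a /ₘ M a a else 0) * M a j :=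
    fun i j => by rw [hTM]; rfl
  refine ⟨T, hT, fun i j hij => ?_, fun i hia => ?_⟩
  · rcases hij with hai | hja
    · simp [hTM_apply, hai.not_gt]
    · simp [hTM_apply, hM hja]
  · rw [hTM_apply]
    rcases hia.lt_or_gt with hia | hai
    · rw [if_pos hia, mul_comm, ← modByMonic_eq_sub_mul_div]
      exact degree_modByMonic_lt _ ha
    · simp [hM hai, hai.not_gt, bot_lt_iff_ne_bot, ha.ne_zero]

theorem exists_isUnit_mul_isHermiteForm_of_monic {M : Matrix n n K[X]}
    (hM : M.IsUpperTriangular) (hmonic : ∀ j, (M j j).Monic) :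
    ∃ T : Matrix n n K[X], IsUnit T ∧ (T * M).IsHermiteForm := by
  suffices ∀ s : Finset n, ∃ T : Matrix n n K[X], IsUnit T ∧ (T * M).IsUpperTriangular ∧
      (∀ j, (T * M) j j = M j j) ∧
      ∀ j ∈ s, ∀ i, i ≠ j → ((T * M) i j).degree < (M j j).degree by
    obtain ⟨T, hT, htri, hdiag, hdeg⟩ := this Finset.univ
    exact ⟨T, hT, ⟨htri, fun j => hdiag j ▸ hmonic j,
      fun i j hij => hdiag j ▸ hdeg j (Finset.mem_univ j) i hij⟩⟩
  intro s
  induction s using Finset.induction_on_max with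
  | empty => exact ⟨1, isUnit_one, by simpa using hM, by simp, by simp⟩
  | insert a s hs ih =>
    obtain ⟨T, hT, htri, hdiag, hdeg⟩ := ih
    obtain ⟨T', hT', hkeep, hred⟩ :=
      exists_isUnit_mul_reduce_column htri (a := a) (by rw [hdiag]; exact hmonic a)
    refine ⟨T' * T, hT'.mul hT, fun i j hji => ?_, fun j => ?_, fun j hj i hij => ?_⟩
    all_goals rw [Matrix.mul_assoc]
    · rw [hkeep i j ((le_or_gt a i).imp_right fun hia => hji.trans hia)]
      exact htri hji
    · rw [hkeep j j (le_or_gt a j), hdiag]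
    · rcases Finset.mem_insert.mp hj with rfl | hj
      · rw [← hdiag j]
        exact hred i hij
      · rw [hkeep i j (Or.inr (hs j hj))]
        exact hdeg j hj i hij

theorem exists_isUnit_mul_isHermiteForm {A : Matrix n n K[X]} (hA : A.det ≠ 0) :
    ∃ U : Matrix n n K[X], IsUnit U ∧ (U * A).IsHermiteForm := by
  obtain ⟨U₁, hU₁, htri⟩ := exists_isUnit_mul_isUpperTriangular A
  have hdet : (U₁ * A).det ≠ 0 := by
    rw [det_mul]
    exact mul_ne_zero ((isUnit_iff_isUnit_det U₁).mp hU₁).ne_zero hA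
  obtain ⟨D, hD, htri', hmonic⟩ := exists_isUnit_mul_monic_diag htri hdet
  obtain ⟨T, hT, hH⟩ := exists_isUnit_mul_isHermiteForm_of_monic htri' hmonic
  exact ⟨T * D * U₁, (hT.mul hD).mul hU₁, by simpa only [Matrix.mul_assoc] using hH⟩

end Field

theorem IsUpperTriangular.isUnit_apply_castAdd_of_mul_eq_one {R : Type*} [CommRing R]
    {L K : ℕ} {M : Matrix (Fin (L + K)) (Fin (L + K)) R} (hM : M.IsUpperTriangular)
    {G : Matrix (Fin L) (Fin (L + K)) R} (hG : G * M.submatrix id (Fin.castAdd K) = 1)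
    (i : Fin L) : IsUnit (M (Fin.castAdd K i) (Fin.castAdd K i)) := by
  set T := M.submatrix (Fin.castAdd K) (Fin.castAdd K)
  have hT : T.IsUpperTriangular := fun a b hab => hM hab
  have hGT : G.submatrix id (Fin.castAdd K) * T = 1 := by
    rw [← hG]
    ext a b
    simp only [mul_apply, submatrix_apply, id_eq, Fin.sum_univ_add, T]
    refine (add_eq_left.mpr (Finset.sum_eq_zero fun k _ => ?_)).symm
    rw [hM (Fin.lt_def.mpr (by simp; omega)), mul_zero]
  have hdet := isUnit_det_of_left_inverse hGT
  rw [det_of_isUpperTriangular hT, IsUnit.prod_univ_iff] at hdet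
  exact hdet i

end Matrix

theorem LeftUnimodular.submatrix_id {α β γ : Type*} [Fintype α] [Fintype β] [Fintype γ]
    [DecidableEq β] [DecidableEq γ] {P : Matrix α β ℝ[X]} (hP : LeftUnimodular P)
    {f : γ → β} (hf : Function.Injective f) : LeftUnimodular (P.submatrix id f) := by
  obtain ⟨G, hG⟩ := hP
  exact ⟨G.submatrix f id, by
    rw [← Matrix.submatrix_mul _ _ _ _ _ Function.bijective_id, hG, Matrix.submatrix_one _ hf]⟩

theorem LeftUnimodular.isUnit_mul {α β : Type*} [Fintype α] [Fintype β] [DecidableEq α]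
    [DecidableEq β] {P : Matrix α β ℝ[X]} (hP : LeftUnimodular P) {U : Matrix α α ℝ[X]}
    (hU : IsUnit U) : LeftUnimodular (U * P) := by
  obtain ⟨G, hG⟩ := hP
  obtain ⟨u, rfl⟩ := hU
  refine ⟨G * (↑u⁻¹ : Matrix α α ℝ[X]), ?_⟩
  rw [Matrix.mul_assoc, ← Matrix.mul_assoc (↑u⁻¹ : Matrix α α ℝ[X]), u.inv_mul, Matrix.one_mul,
    hG]

theorem kronecker_hermite_general_general {L K : ℕ}
    (R : Matrix (Fin (L + K)) (Fin (L + K)) (Polynomial ℝ)) (hdet : R.det ≠ 0)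
    (hL : ∀ J : Finset (Fin (L + K)), J.card = L → LeftUnimodular (colSub R J)) :
    ∃ U : Matrix (Fin (L + K)) (Fin (L + K)) (Polynomial ℝ),
      (∃ V : Matrix (Fin (L + K)) (Fin (L + K)) (Polynomial ℝ), U * V = 1 ∧ V * U = 1) ∧
      (∀ i j : Fin L, (U * R) (Fin.castAdd K i) (Fin.castAdd K j) = if i = j then 1 else 0) ∧
      (∀ (i : Fin K) (j : Fin L), (U * R) (Fin.natAdd L i) (Fin.castAdd K j) = 0) ∧
      (∀ i j : Fin K, j < i → (U * R) (Fin.natAdd L i) (Fin.natAdd L j) = 0) ∧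
      (∀ i : Fin K, ∀ k : Fin (L + K), k ≠ Fin.natAdd L i →
        ((U * R) k (Fin.natAdd L i)).degree <
          ((U * R) (Fin.natAdd L i) (Fin.natAdd L i)).degree) := by
  obtain ⟨U, hU, hH⟩ := Matrix.exists_isUnit_mul_isHermiteForm hdet
  obtain ⟨G, hG⟩ : LeftUnimodular ((U * R).submatrix id (Fin.castAdd K)) := by
    have hJ := hL (Finset.univ.map (Fin.castAddEmb K)) (by simp)
    have := (hJ.submatrix_id (f := fun i => ⟨Fin.castAdd K i, by simp⟩)
      fun i j h => Fin.castAdd_injective L K (congrArg Subtype.val h)).isUnit_mul hU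
    rwa [Matrix.submatrix_mul U R id id _ Function.bijective_id, Matrix.submatrix_id_id]
  have hcol (j : Fin L) (k : Fin (L + K)) :
      (U * R) k (Fin.castAdd K j) = if k = Fin.castAdd K j then 1 else 0 :=
    hH.apply_eq_ite_of_isUnit (hH.isUpperTriangular.isUnit_apply_castAdd_of_mul_eq_one hG j) k
  refine ⟨U, isUnit_iff_exists.mp hU, fun i j => ?_, fun i j => ?_, fun i j hji => ?_,
    fun i k hk => hH.degree_lt _ _ hk⟩
  · simp only [hcol, (Fin.castAdd_injective L K).eq_iff]
  · rw [hcol, if_neg (Fin.ne_of_gt (Fin.lt_def.mpr (by simp; omega)))]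
  · exact hH.isUpperTriangular ((Fin.natAdd_lt_natAdd_iff L).mpr hji)

/-- Kronecker-Hermite canonical kernel representation, general
case (matrix size `L + K`, so that `L` columns carry the identity block). -/
theorem kronecker_hermite_general {L K : ℕ}
    (R : Matrix (Fin (L + K)) (Fin (L + K)) (Polynomial ℝ)) (hdet : R.det ≠ 0)
    (hL : ∀ J : Finset (Fin (L + K)), J.card = L → LeftUnimodular (colSub R J))
    (hLmax : ¬ ∀ J : Finset (Fin (L + K)), J.card = L + 1 → LeftUnimodular (colSub R J)) :
    ∃ U : Matrix (Fin (L + K)) (Fin (L + K)) (Polynomial ℝ),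
      (∃ V : Matrix (Fin (L + K)) (Fin (L + K)) (Polynomial ℝ), U * V = 1 ∧ V * U = 1) ∧
      (∀ i j : Fin L, (U * R) (Fin.castAdd K i) (Fin.castAdd K j) = if i = j then 1 else 0) ∧
      (∀ (i : Fin K) (j : Fin L), (U * R) (Fin.natAdd L i) (Fin.castAdd K j) = 0) ∧
      (∀ i j : Fin K, j < i → (U * R) (Fin.natAdd L i) (Fin.natAdd L j) = 0) ∧
      (∀ i : Fin K, ∀ k : Fin (L + K), k ≠ Fin.natAdd L i →
        ((U * R) k (Fin.natAdd L i)).degree <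
          ((U * R) (Fin.natAdd L i) (Fin.natAdd L i)).degree) :=
  kronecker_hermite_general_general R hdet hL
end
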